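/- arXiv:1412.0987 — 3 statements merged into one kernel-verified Lean document; each statement's English description precedes it below -/
import Mathlib

section
/- Let Δ be Z-graded with partial order ≼ on Δ⁺ (γ ≽ μ iff γ−μ is a nonnegative integer combination of simple roots), and let I be a lower ideal of the poset Δ(1) (with the induced order, where γ covers γ' iff γ−γ' ∈ Π(0)). Then for every k ≥ 1, the set I^k = (I + I^{k-1}) ∩ Δ is a lower ideal of the poset Δ(k). Dually, if I is an upper ideal of Δ(1), then I^k is an upper ideal of Δ(k) for all k ≥ 1. -/
open RealInnerProductSpace

variable {V : Type*} [NormedAddCommGroup V] [InnerProductSpace ℝ V] [FiniteDimensional ℝ V]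

/-- The orthogonal reflection in the hyperplane orthogonal to `α`. -/
noncomputable def sref (α : V) : V ≃ₗ[ℝ] V :=
  (Submodule.reflection ((ℝ ∙ α)ᗮ)).toLinearEquiv

/-- `Δ` is an (irreducible, crystallographic, reduced) root system, equipped with a
`ℤ`-grading `d` (so that `Δ(i) = {γ ∈ Δ | d γ = i}`) and a compatible set `Pos = Δ⁺`
of positive roots (compatibility: every root of level `≥ 1` is positive). -/
structure GradedRootSystem (Δ : Set V) (d : V → ℤ) (Pos : Set V) : Prop where
  finite : Δ.Finite
  span_top : Submodule.span ℝ Δ = ⊤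
  nonzero : ∀ α ∈ Δ, α ≠ 0
  neg_mem : ∀ α ∈ Δ, -α ∈ Δ
  reduced : ∀ α ∈ Δ, ∀ c : ℝ, c • α ∈ Δ → c = 1 ∨ c = -1
  reflect_mem : ∀ α ∈ Δ, ∀ β ∈ Δ, β - (2 * ⟪β, α⟫ / ⟪α, α⟫) • α ∈ Δ
  crystallographic : ∀ α ∈ Δ, ∀ β ∈ Δ, ∃ n : ℤ, (n : ℝ) = 2 * ⟪β, α⟫ / ⟪α, α⟫
  irreducible : ∀ Δ₁ Δ₂ : Set V, Δ = Δ₁ ∪ Δ₂ → (∀ a ∈ Δ₁, ∀ b ∈ Δ₂, ⟪a, b⟫ = 0) →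
    Δ₁ = ∅ ∨ Δ₂ = ∅
  grade_add : ∀ γ₁ ∈ Δ, ∀ γ₂ ∈ Δ, γ₁ + γ₂ ∈ Δ → d (γ₁ + γ₂) = d γ₁ + d γ₂
  grade_neg : ∀ γ ∈ Δ, d (-γ) = - d γ
  pos_subset : Pos ⊆ Δ
  pos_iff : ∀ γ ∈ Δ, (γ ∈ Pos ↔ -γ ∉ Pos)
  pos_add : ∀ γ₁ ∈ Pos, ∀ γ₂ ∈ Pos, γ₁ + γ₂ ∈ Δ → γ₁ + γ₂ ∈ Pos
  compatible : ∀ γ ∈ Δ, 1 ≤ d γ → γ ∈ Pos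

/-- The level set `Δ(i)` of the grading. -/
def level (Δ : Set V) (d : V → ℤ) (i : ℤ) : Set V := {γ ∈ Δ | d γ = i}

/-- `Δ(≥ k)`. -/
def levelGE (Δ : Set V) (d : V → ℤ) (k : ℤ) : Set V := {γ ∈ Δ | k ≤ d γ}

/-- `Δ(≤ k)`. -/
def levelLE (Δ : Set V) (d : V → ℤ) (k : ℤ) : Set V := {γ ∈ Δ | d γ ≤ k}

/-- `Δ(0)⁺`, the positive part of `Δ(0)`. -/
def pos0 (d : V → ℤ) (Pos : Set V) : Set V := {γ ∈ Pos | d γ = 0}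

/-- The simple roots of a positive system `P`: positive roots that are not the sum
of two positive roots. -/
def simpleRoots (P : Set V) : Set V := {γ ∈ P | ¬ ∃ a ∈ P, ∃ b ∈ P, γ = a + b}

/-- `idealPow Δ I k = I^k`, with `I¹ = I` and `I^{k+1} = (I + I^k) ∩ Δ`
(and `I⁰ = ∅` by convention). -/
def idealPow (Δ I : Set V) : ℕ → Set V
  | 0 => ∅
  | 1 => I
  | (k+2) => {x ∈ Δ | ∃ a ∈ I, ∃ b ∈ idealPow Δ I (k+1), x = a + b}

/-- `⟨I⟩ = ⋃_{k ≥ 1} I^k`. -/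
def gen (Δ I : Set V) : Set V := ⋃ k : ℕ, idealPow Δ I (k+1)

/-- A subset `M` of roots is closed if it is closed under root addition. -/
def IsClosedSubset (Δ M : Set V) : Prop :=
  ∀ γ₁ ∈ M, ∀ γ₂ ∈ M, γ₁ + γ₂ ∈ Δ → γ₁ + γ₂ ∈ M

/-- Bi-convexity of `M ⊆ Δ⁺`: both `M` and `Δ⁺ \ M` are closed. -/
def IsBiConvex (Δ Pos M : Set V) : Prop :=
  IsClosedSubset Δ M ∧ IsClosedSubset Δ (Pos \ M)

/-- The partial order on each level `Δ(i)`: `γ' ≼ γ` iff `γ - γ'` is a nonnegative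
integral combination of the simple roots `Π(0)` of `Δ(0)⁺`. -/
def leLevel (d : V → ℤ) (Pos : Set V) (γ' γ : V) : Prop :=
  γ - γ' ∈ AddSubmonoid.closure (simpleRoots (pos0 d Pos))

/-- A lower ideal of the weight poset `Δ(i)`. -/
def IsLowerIdeal (Δ : Set V) (d : V → ℤ) (Pos : Set V) (i : ℤ) (I : Set V) : Prop :=
  I ⊆ level Δ d i ∧ ∀ γ ∈ I, ∀ ν ∈ level Δ d i, leLevel d Pos ν γ → ν ∈ I

/-- An upper ideal of the weight poset `Δ(i)`. -/
def IsUpperIdeal (Δ : Set V) (d : V → ℤ) (Pos : Set V) (i : ℤ) (I : Set V) : Prop :=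
  I ⊆ level Δ d i ∧ ∀ γ ∈ I, ∀ ν ∈ level Δ d i, leLevel d Pos γ ν → ν ∈ I

/-- The Weyl group of the set of roots `S`: the subgroup of `GL(V)` generated by the
reflections `s_α`, `α ∈ S`. -/
noncomputable def weyl (S : Set V) : Subgroup (V ≃ₗ[ℝ] V) :=
  Subgroup.closure {g | ∃ α ∈ S, g = sref α}

/-- The inversion set `N(w) = {γ ∈ Δ⁺ | -w(γ) ∈ Δ⁺}`. -/
def invSet (Pos : Set V) (w : V ≃ₗ[ℝ] V) : Set V := {γ ∈ Pos | -(w γ) ∈ Pos}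

/-- `W⁰`, the minimal length coset representatives of `W/W(0)`:
elements of `W` sending `Δ(0)⁺` into `Δ⁺`. -/
noncomputable def W0 (Δ : Set V) (d : V → ℤ) (Pos : Set V) : Set (V ≃ₗ[ℝ] V) :=
  {w | w ∈ weyl Δ ∧ ∀ γ ∈ pos0 d Pos, w γ ∈ Pos}

/-!
For distinct roots `x, y` with `⟪x, y⟫ > 0`, `x - y` is a root. Hence if `a + b` and
`a + b - α` are roots, so is `a - α` or `b - α`, and by induction on `k` the set `I^k` stays
closed under subtracting (resp. adding) simple roots of `Δ(0)` whenever the result is a root.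
If `ν ≼ γ` in `Δ(k)` with `γ ∈ I^k`, then `γ - ν` is a sum of simple roots `α`, one of which
has `⟪γ - ν, α⟫ > 0`; so `γ - α` or `ν + α` is a root, and induction on the number of summands
moves `ν` into `I^k`.
-/

theorem ne_of_mem_level {E : Type*} {Δ : Set E} {d : E → ℤ} {i j : ℤ} {x y : E}
    (hx : x ∈ level Δ d i) (hy : y ∈ level Δ d j) (hij : i ≠ j) : x ≠ y := by
  rintro rfl
  exact hij (hx.2.symm.trans hy.2)

open scoped Pointwise

section

variable {E : Type*} [NormedAddCommGroup E] [InnerProductSpace ℝ E]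

theorem Multiset.exists_mem_inner_sum_pos {s : Multiset E} (hs : s.sum ≠ 0) :
    ∃ α ∈ s, 0 < ⟪s.sum, α⟫ := by
  by_contra! hle
  have hsum : ⟪s.sum, s.sum⟫ ≤ 0 := by
    rw [← innerₗ_apply_apply, map_multiset_sum]
    exact (Multiset.sum_map_le_sum_map _ (fun _ ↦ 0) hle).trans_eq (by simp)
  exact hsum.not_gt (real_inner_self_pos.2 hs)

def IsStableUnderSub (Δ S J : Set E) : Prop :=
  ∀ γ ∈ J, ∀ α ∈ S, γ - α ∈ Δ → γ - α ∈ J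

namespace GradedRootSystem

variable {Δ : Set E} {d : E → ℤ} {Pos : Set E} (h : GradedRootSystem Δ d Pos)
include h

/-- Both Cartan integers are positive and their product is at most `4`, so one of them is `1`
(and `x - y` is a reflection of a root), or both are `2` and `x = y`. -/
theorem sub_mem_of_inner_pos {x y : E} (hx : x ∈ Δ) (hy : y ∈ Δ) (hxy : 0 < ⟪x, y⟫)
    (hne : x ≠ y) : x - y ∈ Δ := by
  have hxx : 0 < ⟪x, x⟫ := real_inner_self_pos.2 (h.nonzero x hx)
  have hyy : 0 < ⟪y, y⟫ := real_inner_self_pos.2 (h.nonzero y hy)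
  have hyx : ⟪y, x⟫ = ⟪x, y⟫ := real_inner_comm x y
  obtain ⟨n, hn⟩ := h.crystallographic y hy x hx
  obtain ⟨m, hm⟩ := h.crystallographic x hx y hy
  rw [hyx] at hm
  have hn0 : 0 < n := by exact_mod_cast hn ▸ (by positivity : 0 < 2 * ⟪x, y⟫ / ⟪y, y⟫)
  have hm0 : 0 < m := by exact_mod_cast hm ▸ (by positivity : 0 < 2 * ⟪x, y⟫ / ⟪x, x⟫)
  by_cases hn1 : n = 1
  · have hxy' := h.reflect_mem y hy x hx
    rw [← hn, hn1] at hxy'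
    simpa using hxy'
  by_cases hm1 : m = 1
  · have hyx' := h.neg_mem _ (h.reflect_mem x hx y hy)
    rw [hyx, ← hm, hm1] at hyx'
    simpa using hyx'
  have hcs : ⟪x, y⟫ * ⟪x, y⟫ ≤ ⟪x, x⟫ * ⟪y, y⟫ := real_inner_mul_inner_self_le x y
  have hnm : (n : ℝ) * m ≤ 4 := by
    rw [hn, hm, div_mul_div_comm, div_le_iff₀ (by positivity)]
    nlinarith
  have hnm' : n * m ≤ 4 := by exact_mod_cast hnm
  have hn2' : 2 ≤ n := by omega
  have hm2' : 2 ≤ m := by omega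
  have hn2 : (n : ℝ) = 2 := by norm_cast; nlinarith
  have hm2 : (m : ℝ) = 2 := by norm_cast; nlinarith
  rw [hn2, eq_div_iff hyy.ne'] at hn
  rw [hm2, eq_div_iff hxx.ne'] at hm
  have hzero : ⟪x - y, x - y⟫ = 0 := by
    rw [inner_sub_left, inner_sub_right, inner_sub_right, hyx]
    linarith
  exact absurd (sub_eq_zero.1 (inner_self_eq_zero.1 hzero)) hne

theorem add_mem_of_inner_neg {x y : E} (hx : x ∈ Δ) (hy : y ∈ Δ) (hxy : ⟪x, y⟫ < 0)
    (hne : x + y ≠ 0) : x + y ∈ Δ := by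
  have hxy' : 0 < ⟪x, -y⟫ := by rwa [inner_neg_right, neg_pos]
  simpa using h.sub_mem_of_inner_pos hx (h.neg_mem y hy) hxy'
    (fun e ↦ hne (by rw [e, neg_add_cancel]))

/-- If neither difference is a root, then `⟪a, α⟫, ⟪b, α⟫ ≤ 0` and
`⟪a + b - α, a⟫, ⟪a + b - α, b⟫ ≤ 0`, which forces `⟪a + b, a + b⟫ ≤ 0`. -/
theorem sub_mem_or_sub_mem {a b α : E} (ha : a ∈ Δ) (hb : b ∈ Δ) (hα : α ∈ Δ)
    (hab : a + b ∈ Δ) (habα : a + b - α ∈ Δ) (haα : a ≠ α) (hbα : b ≠ α) :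
    a - α ∈ Δ ∨ b - α ∈ Δ := by
  by_contra! ⟨ha', hb'⟩
  have h₁ : ⟪a, α⟫ ≤ 0 := not_lt.1 fun hpos ↦ ha' (h.sub_mem_of_inner_pos ha hα hpos haα)
  have h₂ : ⟪b, α⟫ ≤ 0 := not_lt.1 fun hpos ↦ hb' (h.sub_mem_of_inner_pos hb hα hpos hbα)
  have h₃ : ⟪a + b - α, a⟫ ≤ 0 := not_lt.1 fun hpos ↦ hb' <| by
    have hne : a + b - α ≠ a := fun e ↦ hbα <| by
      rw [← sub_eq_zero, show b - α = a + b - α - a by abel, e, sub_self]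
    simpa only [show a + b - α - a = b - α by abel] using
      h.sub_mem_of_inner_pos habα ha hpos hne
  have h₄ : ⟪a + b - α, b⟫ ≤ 0 := not_lt.1 fun hpos ↦ ha' <| by
    have hne : a + b - α ≠ b := fun e ↦ haα <| by
      rw [← sub_eq_zero, show a - α = a + b - α - b by abel, e, sub_self]
    simpa only [show a + b - α - b = a - α by abel] using
      h.sub_mem_of_inner_pos habα hb hpos hne
  have hpos : 0 < ⟪a + b, a + b⟫ := real_inner_self_pos.2 (h.nonzero _ hab)
  simp only [inner_add_left, inner_add_right, inner_sub_left] at h₃ h₄ hpos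
  linarith [real_inner_comm a α, real_inner_comm b α, real_inner_comm a b]

theorem neg_mem_level {x : E} {i : ℤ} (hx : x ∈ level Δ d i) : -x ∈ level Δ d (-i) :=
  ⟨h.neg_mem x hx.1, by rw [h.grade_neg x hx.1, hx.2]⟩

theorem add_mem_level {x y : E} {i j : ℤ} (hx : x ∈ level Δ d i) (hy : y ∈ level Δ d j)
    (hxy : x + y ∈ Δ) : x + y ∈ level Δ d (i + j) :=
  ⟨hxy, by rw [h.grade_add x hx.1 y hy.1 hxy, hx.2, hy.2]⟩

theorem sub_mem_level {x y : E} {i j : ℤ} (hx : x ∈ level Δ d i) (hy : y ∈ level Δ d j)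
    (hxy : x - y ∈ Δ) : x - y ∈ level Δ d (i - j) := by
  refine ⟨hxy, ?_⟩
  have hgrade := h.grade_add (x - y) hxy y hy.1 (by rw [sub_add_cancel]; exact hx.1)
  rw [sub_add_cancel, hx.2, hy.2] at hgrade
  omega

theorem simpleRoots_pos0_subset_level_zero : simpleRoots (pos0 d Pos) ⊆ level Δ d 0 :=
  fun _ hα ↦ ⟨h.pos_subset hα.1.1, hα.1.2⟩

theorem idealPow_subset_level {I : Set E} (hI : I ⊆ level Δ d 1) :
    ∀ k : ℕ, idealPow Δ I k ⊆ level Δ d k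
  | 0 => Set.empty_subset _
  | 1 => hI
  | k + 2 => by
    rintro _ ⟨hab, a, ha, b, hb, rfl⟩
    have hlevel := h.add_mem_level (hI ha) (idealPow_subset_level hI (k + 1) hb) hab
    rwa [show (1 : ℤ) + ((k + 1 : ℕ) : ℤ) = ((k + 2 : ℕ) : ℤ) by push_cast; ring] at hlevel

theorem isStableUnderSub_idealPow {S I : Set E} (hS : S ⊆ level Δ d 0) (hI : I ⊆ level Δ d 1)
    (hIS : IsStableUnderSub Δ S I) : ∀ k : ℕ, IsStableUnderSub Δ S (idealPow Δ I k)
  | 0 => fun _ hγ ↦ hγ.elim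
  | 1 => hIS
  | k + 2 => by
    rintro _ ⟨hab, a, ha, b, hb, rfl⟩ α hα habα
    have ha₁ := hI ha
    have hb₁ := h.idealPow_subset_level hI (k + 1) hb
    have hα₀ := hS hα
    rcases h.sub_mem_or_sub_mem ha₁.1 hb₁.1 hα₀.1 hab habα (ne_of_mem_level ha₁ hα₀ one_ne_zero)
      (ne_of_mem_level hb₁ hα₀ (by omega)) with haα | hbα
    · exact ⟨habα, a - α, hIS a ha α hα haα, b, hb, by abel⟩
    · exact ⟨habα, a, ha, b - α, isStableUnderSub_idealPow hS hI hIS (k + 1) b hb α hα hbα,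
        by abel⟩

theorem mem_of_sub_mem_closure {S J : Set E} {k : ℤ} (hk : k ≠ 0) (hS : S ⊆ level Δ d 0)
    (hJ : J ⊆ level Δ d k) (hJS : IsStableUnderSub Δ S J) {γ ν : E} (hγ : γ ∈ J)
    (hν : ν ∈ level Δ d k) (hγν : γ - ν ∈ AddSubmonoid.closure S) : ν ∈ J := by
  classical
  obtain ⟨s, hsS, hsum⟩ := AddSubmonoid.exists_multiset_of_mem_closure hγν
  clear hγν
  induction s using Multiset.strongInductionOn generalizing γ ν with
  | ih s ih =>
    obtain rfl | hne := eq_or_ne γ ν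
    · exact hγ
    obtain ⟨α, hαs, hpos⟩ := Multiset.exists_mem_inner_sum_pos (hsum ▸ sub_ne_zero.2 hne)
    have hαS := hsS α hαs
    have hα₀ := hS hαS
    have hrest : ∀ x ∈ s.erase α, x ∈ S := fun x hx ↦ hsS x (Multiset.mem_of_mem_erase hx)
    have hsplit : s.sum = α + (s.erase α).sum := (Multiset.sum_erase hαs).symm
    rw [hsum, inner_sub_left] at hpos
    rcases lt_or_ge 0 ⟪γ, α⟫ with hγα | hνα
    · have hγα' := h.sub_mem_of_inner_pos (hJ hγ).1 hα₀.1 hγα (ne_of_mem_level (hJ hγ) hα₀ hk)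
      exact ih _ (Multiset.erase_lt.2 hαs) (hJS γ hγ α hαS hγα') hν hrest
        (by rw [sub_right_comm, ← hsum, hsplit, add_sub_cancel_left])
    · have hνα : ν + α ∈ Δ := h.add_mem_of_inner_neg hν.1 hα₀.1 (by linarith)
        (fun e ↦ ne_of_mem_level hν (h.neg_mem_level hα₀) (by omega) (eq_neg_of_add_eq_zero_left e))
      have hνα' : ν + α ∈ J := ih _ (Multiset.erase_lt.2 hαs) hγ
        (by simpa using h.add_mem_level hν hα₀ hνα) hrest
        (by rw [sub_add_eq_sub_sub, ← hsum, hsplit, add_sub_cancel_left])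
      simpa using hJS _ hνα' α hαS (by simpa using hν.1)

theorem isLowerIdeal_idealPow {I : Set E} (hI : IsLowerIdeal Δ d Pos 1 I) {k : ℕ}
    (hk : k ≠ 0) :
    IsLowerIdeal Δ d Pos k (idealPow Δ I k) := by
  have hS := h.simpleRoots_pos0_subset_level_zero
  have hIS : IsStableUnderSub Δ (simpleRoots (pos0 d Pos)) I := fun γ hγ α hα hγα ↦
    hI.2 γ hγ _ (by simpa using h.sub_mem_level (hI.1 hγ) (hS hα) hγα)
      (by simpa [leLevel] using AddSubmonoid.subset_closure hα)
  have hJ := h.idealPow_subset_level hI.1 k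
  exact ⟨hJ, fun γ hγ ν hν hle ↦ h.mem_of_sub_mem_closure (by exact_mod_cast hk) hS hJ
    (h.isStableUnderSub_idealPow hS hI.1 hIS k) hγ hν hle⟩

theorem isUpperIdeal_idealPow {I : Set E} (hI : IsUpperIdeal Δ d Pos 1 I) {k : ℕ}
    (hk : k ≠ 0) :
    IsUpperIdeal Δ d Pos k (idealPow Δ I k) := by
  have hS : -simpleRoots (pos0 d Pos) ⊆ level Δ d 0 := fun α hα ↦ by
    simpa using h.neg_mem_level (h.simpleRoots_pos0_subset_level_zero hα)
  have hIS : IsStableUnderSub Δ (-simpleRoots (pos0 d Pos)) I := fun γ hγ α hα hγα ↦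
    hI.2 γ hγ _ (by simpa using h.sub_mem_level (hI.1 hγ) (hS hα) hγα)
      (by simpa [leLevel] using AddSubmonoid.subset_closure (Set.mem_neg.1 hα))
  have hJ := h.idealPow_subset_level hI.1 k
  exact ⟨hJ, fun γ hγ ν hν hle ↦ h.mem_of_sub_mem_closure (by exact_mod_cast hk) hS hJ
    (h.isStableUnderSub_idealPow hS hI.1 hIS k) hγ hν
    ((AddSubmonoid.mem_closure_neg _ _).2 (by rwa [neg_sub]))⟩

end GradedRootSystem

end

/-- If `I` is a lower (resp. upper) ideal of `Δ(1)`, then `I^k` is a lower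
(resp. upper) ideal of `Δ(k)` for every `k ≥ 1`. -/
theorem stmt3 (Δ : Set V) (d : V → ℤ) (Pos : Set V)
    (h : GradedRootSystem Δ d Pos) (I : Set V) :
    (IsLowerIdeal Δ d Pos 1 I → ∀ k : ℕ, 1 ≤ k →
      IsLowerIdeal Δ d Pos (k : ℤ) (idealPow Δ I k)) ∧
    (IsUpperIdeal Δ d Pos 1 I → ∀ k : ℕ, 1 ≤ k →
      IsUpperIdeal Δ d Pos (k : ℤ) (idealPow Δ I k)) :=
  ⟨fun hI _ hk ↦ h.isLowerIdeal_idealPow hI (by omega),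
    fun hI _ hk ↦ h.isUpperIdeal_idealPow hI (by omega)⟩
end

section
/- Let Δ be Z-graded with compatible positive system, let I be a lower ideal of Δ(1), and let I^c = Δ(1) \ I (an upper ideal of Δ(1)). Then Δ(≥1) \ ⟨I^c⟩ is a bi-convex subset of Δ⁺, where Δ(≥1) = ⊔_{j≥1} Δ(j) and ⟨I^c⟩ = ⋃_{k≥1}(I^c)^k. -/
open RealInnerProductSpace

variable {V : Type*} [NormedAddCommGroup V] [InnerProductSpace ℝ V] [FiniteDimensional ℝ V]

/-!
Write `J = Δ(1) \ I`, an upper ideal of `Δ(1)`, and `M = Δ(≥1) \ ⟨J⟩`, so that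
`Δ⁺ \ M = Δ(0)⁺ ⊔ ⟨J⟩`. The roots in `⟨J⟩` are exactly the roots that are sums of elements of
`J`: a root `z = ∑ aᵢ` has `⟪z, aᵢ⟫ > 0` for some `i`, so `z - aᵢ` is again a root and one can
peel summands off one at a time. Hence `⟨J⟩` is closed, and since `J` is an upper ideal, adding
an element of `Δ(0)⁺` to an element of `⟨J⟩` stays in `⟨J⟩` whenever the result is a root; this
makes `Δ(0)⁺ ⊔ ⟨J⟩` closed.

For `M`, one shows by induction on `k` that if `x + y ∈ J^k` with `x, y` of positive level, then
`x` or `y` lies in `⟨J⟩`. Write `x + y = a + t` with `a ∈ J`, `t ∈ J^(k-1)`. One of `x - a`,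
`y - a` is a root, since otherwise `⟪x, a⟫, ⟪y, a⟫, ⟪x, t⟫, ⟪y, t⟫` are all `≤ 0` while they
sum to `‖x + y‖²`. Say `x - a` is; it has positive level (apply induction to
`t = (x - a) + y`) or level `0`, and then `x ∈ J` or `y = t + (a - x) ∈ ⟨J⟩`.
-/

section

variable {E : Type*} [NormedAddCommGroup E]

/-- Writing `a ≺ γ` when `γ = a + (a nonempty sum from S)`, the absence of vanishing sums makes
`≺` a strict order on the finite set `S`; induct along it. -/
lemma subset_closure_simpleRoots {S : Set E} (hS : S.Finite)
    (hsum : ∀ L : List E, L ≠ [] → (∀ a ∈ L, a ∈ S) → L.sum ≠ 0) :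
    S ⊆ AddSubmonoid.closure (simpleRoots S) := by
  have : Finite S := hS.to_subtype
  let r : S → S → Prop := fun a γ =>
    ∃ L : List E, L ≠ [] ∧ (∀ b ∈ L, b ∈ S) ∧ (γ : E) = a + L.sum
  have : IsTrans S r := ⟨fun a b c ⟨L, hL, hLS, hab⟩ ⟨L', _, hL'S, hbc⟩ =>
    ⟨L ++ L', by simp [hL], by simpa using fun x hx => Or.elim hx (hLS x) (hL'S x),
      by rw [hbc, hab, List.sum_append, add_assoc]⟩⟩
  have : Std.Irrefl r := ⟨fun a ⟨L, hL, hLS, ha⟩ =>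
    hsum L hL hLS (by simpa using ha.symm)⟩
  suffices ∀ γ : S, (γ : E) ∈ AddSubmonoid.closure (simpleRoots S) from fun γ hγ => this ⟨γ, hγ⟩
  intro γ
  induction γ using (Finite.wellFounded_of_trans_of_irrefl r).induction with
  | _ γ ih =>
    by_cases hdec : ∃ a ∈ S, ∃ b ∈ S, (γ : E) = a + b
    · obtain ⟨a, ha, b, hb, hγab⟩ := hdec
      rw [hγab]
      exact add_mem (ih ⟨a, ha⟩ ⟨[b], by simp, by simpa, by simpa⟩)
        (ih ⟨b, hb⟩ ⟨[a], by simp, by simpa, by simp [hγab, add_comm]⟩)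
    · exact AddSubmonoid.subset_closure ⟨γ.2, hdec⟩

variable {Δ Pos J : Set E} {d : E → ℤ}

lemma IsLowerIdeal.isUpperIdeal_diff {i : ℤ} {I : Set E} (hI : IsLowerIdeal Δ d Pos i I) :
    IsUpperIdeal Δ d Pos i (level Δ d i \ I) :=
  ⟨Set.sdiff_subset, fun _ hγ ν hν hle => ⟨hν, fun hνI => hγ.2 (hI.2 ν hνI _ hγ.1 hle)⟩⟩

lemma exists_list_of_mem_idealPow {k : ℕ} {x : E} (hx : x ∈ idealPow Δ J (k + 1)) :
    ∃ L : List E, L.length = k + 1 ∧ (∀ a ∈ L, a ∈ J) ∧ L.sum = x := by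
  induction k generalizing x with
  | zero => exact ⟨[x], rfl, fun a ha => List.mem_singleton.mp ha ▸ hx, List.sum_singleton⟩
  | succ k ih =>
    obtain ⟨-, a, ha, b, hb, rfl⟩ := hx
    obtain ⟨L, hlen, hLJ, rfl⟩ := ih hb
    exact ⟨a :: L, by simp [hlen], by simpa using ⟨ha, hLJ⟩, List.sum_cons⟩

lemma subset_gen : J ⊆ gen Δ J := fun _ ha => Set.mem_iUnion.mpr ⟨0, ha⟩

lemma exists_list_of_mem_gen {x : E} (hx : x ∈ gen Δ J) :
    ∃ L : List E, L ≠ [] ∧ (∀ a ∈ L, a ∈ J) ∧ L.sum = x := by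
  obtain ⟨k, hk⟩ := Set.mem_iUnion.mp hx
  obtain ⟨L, hlen, hLJ, hsum⟩ := exists_list_of_mem_idealPow hk
  exact ⟨L, List.ne_nil_of_length_eq_add_one hlen, hLJ, hsum⟩

variable [InnerProductSpace ℝ E]

lemma exists_mem_inner_pos_of_inner_list_sum_pos {z : E} {L : List E}
    (hz : 0 < ⟪z, L.sum⟫) : ∃ a ∈ L, 0 < ⟪z, a⟫ := by
  have hsum : ⟪z, L.sum⟫ = (L.map (⟪z, ·⟫)).sum := by
    simpa using map_list_sum (innerₛₗ ℝ z) L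
  simpa using List.exists_lt_of_sum_lt (fun _ => (0 : ℝ)) (⟪z, ·⟫) (by simpa [← hsum])

lemma exists_mem_inner_neg_of_inner_list_sum_neg {z : E} {L : List E}
    (hz : ⟪z, L.sum⟫ < 0) : ∃ a ∈ L, ⟪z, a⟫ < 0 := by
  obtain ⟨a, ha, hpos⟩ :=
    exists_mem_inner_pos_of_inner_list_sum_pos (z := -z) (by rwa [inner_neg_left, neg_pos])
  exact ⟨a, ha, by rwa [inner_neg_left, neg_pos] at hpos⟩

namespace GradedRootSystem

lemma eq_of_inner_mul_inner_self_le (h : GradedRootSystem Δ d Pos) {a b : E}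
    (ha : a ∈ Δ) (hb : b ∈ Δ) (hab : 0 < ⟪a, b⟫) (hcs : ⟪a, a⟫ * ⟪b, b⟫ ≤ ⟪a, b⟫ * ⟪a, b⟫) :
    a = b := by
  have ha0 : 0 < ‖a‖ := norm_pos_iff.mpr (h.nonzero a ha)
  have hnorm : ⟪a, b⟫ = ‖a‖ * ‖b‖ := by
    rw [real_inner_self_eq_norm_mul_norm, real_inner_self_eq_norm_mul_norm] at hcs
    nlinarith [real_inner_le_norm a b, norm_nonneg a, norm_nonneg b]
  have hba : b = (‖b‖ / ‖a‖) • a := by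
    rw [div_eq_inv_mul, mul_smul, inner_eq_norm_mul_iff_real.mp hnorm, smul_smul,
      inv_mul_cancel₀ ha0.ne', one_smul]
  rcases h.reduced a ha _ (hba ▸ hb) with hc | hc
  · rw [hba, hc, one_smul]
  · have : 0 ≤ ‖b‖ / ‖a‖ := by positivity
    linarith

/-- In a root system, `⟪a, b⟫ > 0` for distinct roots forces one of the Cartan integers
`⟨a, b^∨⟩, ⟨b, a^∨⟩` to be `1`, so the corresponding reflection gives `±(a - b)`. -/
lemma sub_mem (h : GradedRootSystem Δ d Pos) {a b : E} (ha : a ∈ Δ) (hb : b ∈ Δ)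
    (hab : 0 < ⟪a, b⟫) (hne : a ≠ b) : a - b ∈ Δ := by
  have haa : 0 < ⟪a, a⟫ := real_inner_self_pos.mpr (h.nonzero a ha)
  have hbb : 0 < ⟪b, b⟫ := real_inner_self_pos.mpr (h.nonzero b hb)
  have hba : ⟪b, a⟫ = ⟪a, b⟫ := real_inner_comm a b
  obtain ⟨m, hm⟩ := h.crystallographic b hb a ha
  obtain ⟨n, hn⟩ := h.crystallographic a ha b hb
  have hm1 : 1 ≤ m := Int.cast_pos.mp (by rw [hm]; positivity)
  have hn1 : 1 ≤ n := Int.cast_pos.mp (by rw [hn, hba]; positivity)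
  have hmn : m * n ≤ 3 := by
    by_contra! h4
    refine hne (h.eq_of_inner_mul_inner_self_le ha hb hab ?_)
    have hprod : (m : ℝ) * n * (⟪a, a⟫ * ⟪b, b⟫) = 4 * (⟪a, b⟫ * ⟪a, b⟫) := by
      rw [hm, hn, hba]; field_simp; ring
    have h4' : (4 : ℝ) ≤ m * n := by exact_mod_cast h4
    nlinarith
  obtain rfl | rfl : m = 1 ∨ n = 1 := by
    by_contra! hc
    nlinarith [show 2 ≤ m by omega, show 2 ≤ n by omega]
  · have hr := h.reflect_mem b hb a ha
    rwa [← hm, Int.cast_one, one_smul] at hr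
  · have hr := h.neg_mem _ (h.reflect_mem a ha b hb)
    rwa [← hn, Int.cast_one, one_smul, neg_sub] at hr

lemma add_mem (h : GradedRootSystem Δ d Pos) {a b : E} (ha : a ∈ Δ) (hb : b ∈ Δ)
    (hab : ⟪a, b⟫ < 0) (hne : a + b ≠ 0) : a + b ∈ Δ := by
  simpa using h.sub_mem ha (h.neg_mem b hb) (by rwa [inner_neg_right, neg_pos])
    (fun e => hne (by rw [e, neg_add_cancel]))

lemma inner_nonpos_of_sub_notMem (h : GradedRootSystem Δ d Pos) {a b : E} (ha : a ∈ Δ)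
    (hb : b ∈ Δ) (hab : a - b ∉ Δ) (hne : a ≠ b) : ⟪a, b⟫ ≤ 0 :=
  not_lt.mp fun hpos => hab (h.sub_mem ha hb hpos hne)

lemma sub_mem_or_sub_mem_of_add_eq_add (h : GradedRootSystem Δ d Pos) {x y a t : E}
    (hx : x ∈ Δ) (hy : y ∈ Δ) (ha : a ∈ Δ) (ht : t ∈ Δ) (hs : x + y ∈ Δ)
    (hsum : x + y = a + t) (hxa : x ≠ a) (hya : y ≠ a) : x - a ∈ Δ ∨ y - a ∈ Δ := by
  by_contra! hno
  have htx : t - x = y - a := by rw [sub_eq_sub_iff_add_eq_add, add_comm t, ← hsum, add_comm]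
  have hty : t - y = x - a := by rw [sub_eq_sub_iff_add_eq_add, add_comm t, ← hsum]
  have h1 := h.inner_nonpos_of_sub_notMem hx ha hno.1 hxa
  have h2 := h.inner_nonpos_of_sub_notMem hy ha hno.2 hya
  have h3 := h.inner_nonpos_of_sub_notMem ht hx (htx ▸ hno.2)
    fun he => hya (by rw [← sub_eq_zero, ← htx, he, sub_self])
  have h4 := h.inner_nonpos_of_sub_notMem ht hy (hty ▸ hno.1)
    fun he => hxa (by rw [← sub_eq_zero, ← hty, he, sub_self])
  have hpos : 0 < ⟪x + y, a + t⟫ := hsum ▸ real_inner_self_pos.mpr (h.nonzero _ hs)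
  simp only [inner_add_left, inner_add_right, real_inner_comm t] at hpos
  linarith

/-- Merging two summands with negative inner product shortens a vanishing sum of positive
roots by one, until a single nonzero root remains. -/
lemma list_sum_ne_zero (h : GradedRootSystem Δ d Pos) {L : List E} (hL : L ≠ [])
    (hP : ∀ a ∈ L, a ∈ Pos) : L.sum ≠ 0 := by
  classical
  obtain ⟨n, hn⟩ := Nat.exists_eq_add_one.mpr (List.length_pos_iff.mpr hL)
  induction n generalizing L with
  | zero =>
    obtain ⟨a, rfl⟩ := List.length_eq_one_iff.mp hn
    simpa using h.nonzero a (h.pos_subset (hP a List.mem_cons_self))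
  | succ n ih =>
    obtain ⟨a, T, rfl⟩ := List.exists_cons_of_length_eq_add_one hn
    intro hsum
    have haP := hP a List.mem_cons_self
    have haΔ := h.pos_subset haP
    have hT : T.sum = -a := eq_neg_of_add_eq_zero_right (by simpa using hsum)
    obtain ⟨b, hbT, hab⟩ := exists_mem_inner_neg_of_inner_list_sum_neg (z := a) (L := T)
      (by rw [hT, inner_neg_right, neg_neg_iff_pos]
          exact real_inner_self_pos.mpr (h.nonzero a haΔ))
    have hbP := hP b (List.mem_cons_of_mem a hbT)
    have habP : a + b ∈ Pos := by
      refine h.pos_add a haP b hbP (h.add_mem haΔ (h.pos_subset hbP) hab fun hab0 => ?_)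
      rw [eq_neg_of_add_eq_zero_right hab0] at hbP
      exact (h.pos_iff a haΔ).mp haP hbP
    refine ih (L := (a + b) :: T.erase b) (by simp) ?_ ?_ ?_
    · intro c hc
      rcases List.mem_cons.mp hc with rfl | hc
      · exact habP
      · exact hP c (List.mem_cons_of_mem a (List.mem_of_mem_erase hc))
    · simp only [List.length_cons, List.length_erase_of_mem hbT]
      simp at hn
      omega
    · rw [List.sum_cons, add_assoc, List.sum_erase hbT, hT, add_neg_cancel]

lemma pos0_subset_closure_simpleRoots (h : GradedRootSystem Δ d Pos) :
    pos0 d Pos ⊆ AddSubmonoid.closure (simpleRoots (pos0 d Pos)) :=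
  subset_closure_simpleRoots (h.finite.subset fun _ hγ => h.pos_subset hγ.1)
    fun _ hL hLS => h.list_sum_ne_zero hL fun a ha => (hLS a ha).1

lemma grade_nonneg_of_mem_pos (h : GradedRootSystem Δ d Pos) {γ : E} (hγ : γ ∈ Pos) :
    0 ≤ d γ := by
  have hγΔ := h.pos_subset hγ
  by_contra! hneg
  refine (h.pos_iff γ hγΔ).mp hγ (h.compatible _ (h.neg_mem γ hγΔ) ?_)
  rw [h.grade_neg γ hγΔ]
  omega

end GradedRootSystem

lemma IsUpperIdeal.subset_pos (h : GradedRootSystem Δ d Pos) {i : ℤ} (hi : 0 < i)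
    (hJ : IsUpperIdeal Δ d Pos i J) : J ⊆ Pos := fun _ ha =>
  h.compatible _ (hJ.1 ha).1 (by rw [(hJ.1 ha).2]; omega)

lemma IsUpperIdeal.add_mem_of_mem_pos0 (h : GradedRootSystem Δ d Pos) {i : ℤ}
    (hJ : IsUpperIdeal Δ d Pos i J) {a δ : E} (ha : a ∈ J) (hδ : δ ∈ pos0 d Pos)
    (haδ : a + δ ∈ Δ) : a + δ ∈ J := by
  obtain ⟨haΔ, hda⟩ := hJ.1 ha
  refine hJ.2 a ha _ ⟨haδ, ?_⟩ ?_
  · rw [h.grade_add a haΔ δ (h.pos_subset hδ.1) haδ, hda, hδ.2, add_zero]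
  · simpa [leLevel] using h.pos0_subset_closure_simpleRoots hδ

namespace GradedRootSystem

lemma idealPow_subset_level_s5 (h : GradedRootSystem Δ d Pos) (hJ : J ⊆ level Δ d 1) (k : ℕ) :
    idealPow Δ J (k + 1) ⊆ level Δ d (k + 1) := by
  induction k with
  | zero => exact hJ
  | succ k ih =>
    rintro _ ⟨hxΔ, a, ha, b, hb, rfl⟩
    obtain ⟨haΔ, hda⟩ := hJ ha
    obtain ⟨hbΔ, hdb⟩ := ih hb
    refine ⟨hxΔ, ?_⟩
    rw [h.grade_add a haΔ b hbΔ hxΔ, hda, hdb]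
    push_cast
    ring

lemma list_sum_mem_idealPow (h : GradedRootSystem Δ d Pos) (hJ : J ⊆ Pos) {k : ℕ}
    {L : List E} (hlen : L.length = k + 1) (hLJ : ∀ a ∈ L, a ∈ J) (hΔ : L.sum ∈ Δ) :
    L.sum ∈ idealPow Δ J (k + 1) := by
  classical
  induction k generalizing L with
  | zero =>
    obtain ⟨a, rfl⟩ := List.length_eq_one_iff.mp hlen
    rw [List.sum_singleton]
    exact hLJ a List.mem_cons_self
  | succ k ih =>
    obtain ⟨a, haL, hpos⟩ := exists_mem_inner_pos_of_inner_list_sum_pos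
      (real_inner_self_pos.mpr (h.nonzero _ hΔ))
    have haΔ := h.pos_subset (hJ (hLJ a haL))
    have hrest : L.sum - a = (L.erase a).sum := by rw [← List.sum_erase haL]; abel
    have hlen' : (L.erase a).length = k + 1 := by
      rw [List.length_erase_of_mem haL, hlen]; rfl
    have hLJ' : ∀ b ∈ L.erase a, b ∈ J := fun b hb => hLJ b (List.mem_of_mem_erase hb)
    have hne : L.sum ≠ a := fun he => h.list_sum_ne_zero (L := L.erase a)
      (List.ne_nil_of_length_eq_add_one hlen') (fun b hb => hJ (hLJ' b hb))
      (by rw [← hrest, he, sub_self])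
    have hsub := h.sub_mem hΔ haΔ hpos hne
    rw [hrest] at hsub
    exact ⟨hΔ, a, hLJ a haL, _, ih hlen' hLJ' hsub, (List.sum_erase haL).symm⟩

lemma list_sum_mem_gen (h : GradedRootSystem Δ d Pos) (hJ : J ⊆ Pos) {L : List E}
    (hL : L ≠ []) (hLJ : ∀ a ∈ L, a ∈ J) (hΔ : L.sum ∈ Δ) : L.sum ∈ gen Δ J := by
  obtain ⟨k, hk⟩ := Nat.exists_eq_add_one.mpr (List.length_pos_iff.mpr hL)
  exact Set.mem_iUnion.mpr ⟨k, h.list_sum_mem_idealPow hJ hk hLJ hΔ⟩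

lemma add_mem_gen (h : GradedRootSystem Δ d Pos) (hJ : J ⊆ Pos) {x y : E}
    (hx : x ∈ gen Δ J) (hy : y ∈ gen Δ J) (hxy : x + y ∈ Δ) : x + y ∈ gen Δ J := by
  obtain ⟨L, hL, hLJ, rfl⟩ := exists_list_of_mem_gen hx
  obtain ⟨L', -, hL'J, rfl⟩ := exists_list_of_mem_gen hy
  rw [← List.sum_append] at hxy ⊢
  exact h.list_sum_mem_gen hJ (by simp [hL])
    (by simpa using fun a ha => Or.elim ha (hLJ a) (hL'J a)) hxy

lemma list_sum_add_mem_gen_of_inner_neg (h : GradedRootSystem Δ d Pos)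
    (hJ : IsUpperIdeal Δ d Pos 1 J) {δ : E} (hδ : δ ∈ pos0 d Pos) {L : List E}
    (hLJ : ∀ a ∈ L, a ∈ J) (hneg : ⟪δ, L.sum⟫ < 0) (hΔ : L.sum + δ ∈ Δ) :
    L.sum + δ ∈ gen Δ J := by
  classical
  have hδΔ := h.pos_subset hδ.1
  obtain ⟨a, haL, hδa⟩ := exists_mem_inner_neg_of_inner_list_sum_neg hneg
  have haJ := hLJ a haL
  obtain ⟨haΔ, hda⟩ := hJ.1 haJ
  have haδ : a + δ ∈ Δ := by
    refine h.add_mem haΔ hδΔ (by rwa [real_inner_comm]) fun h0 => ?_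
    rw [eq_neg_of_add_eq_zero_left h0, h.grade_neg δ hδΔ, hδ.2] at hda
    exact absurd hda (by decide)
  have hsum : ((a + δ) :: L.erase a).sum = L.sum + δ := by
    rw [List.sum_cons, ← List.sum_erase haL]; abel
  rw [← hsum] at hΔ ⊢
  refine h.list_sum_mem_gen (hJ.subset_pos h one_pos) (List.cons_ne_nil _ _) ?_ hΔ
  simpa using
    ⟨hJ.add_mem_of_mem_pos0 h haJ hδ haδ, fun b hb => hLJ b (List.mem_of_mem_erase hb)⟩

/-- Either `list_sum_add_mem_gen_of_inner_neg` applies, or `⟪∑ L + δ, ∑ L⟫ > 0` and, as in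
`list_sum_mem_idealPow`, a summand can be peeled off. -/
lemma list_sum_add_mem_gen (h : GradedRootSystem Δ d Pos) (hJ : IsUpperIdeal Δ d Pos 1 J)
    {δ : E} (hδ : δ ∈ pos0 d Pos) {L : List E} (hL : L ≠ []) (hLJ : ∀ a ∈ L, a ∈ J)
    (hΔ : L.sum + δ ∈ Δ) : L.sum + δ ∈ gen Δ J := by
  classical
  have hJP := hJ.subset_pos h one_pos
  obtain ⟨n, hn⟩ := Nat.exists_eq_add_one.mpr (List.length_pos_iff.mpr hL)
  induction n generalizing L with
  | zero =>
    obtain ⟨a, rfl⟩ := List.length_eq_one_iff.mp hn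
    rw [List.sum_singleton] at hΔ ⊢
    exact subset_gen (hJ.add_mem_of_mem_pos0 h (hLJ a List.mem_cons_self) hδ hΔ)
  | succ n ih =>
    by_cases hneg : ⟪δ, L.sum⟫ < 0
    · exact h.list_sum_add_mem_gen_of_inner_neg hJ hδ hLJ hneg hΔ
    have hLsum : 0 < ⟪L.sum, L.sum⟫ :=
      real_inner_self_pos.mpr (h.list_sum_ne_zero hL fun a ha => hJP (hLJ a ha))
    obtain ⟨a, haL, hpos⟩ := exists_mem_inner_pos_of_inner_list_sum_pos
      (z := L.sum + δ) (L := L) (by rw [inner_add_left]; linarith)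
    have haJ := hLJ a haL
    have hrest : L.sum + δ - a = (L.erase a).sum + δ := by rw [← List.sum_erase haL]; abel
    have hlen' : (L.erase a).length = n + 1 := by
      rw [List.length_erase_of_mem haL, hn]; rfl
    have hLJ' : ∀ b ∈ L.erase a, b ∈ J := fun b hb => hLJ b (List.mem_of_mem_erase hb)
    have hne : L.sum + δ ≠ a := fun he => by
      refine h.list_sum_ne_zero (L := δ :: L.erase a) (List.cons_ne_nil _ _) ?_ ?_
      · simpa using ⟨hδ.1, fun b hb => hJP (hLJ' b hb)⟩
      · rw [List.sum_cons, add_comm, ← hrest, he, sub_self]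
    have hsub := h.sub_mem hΔ (hJ.1 haJ).1 hpos hne
    rw [hrest] at hsub
    have hgen := ih (List.ne_nil_of_length_eq_add_one hlen') hLJ' hsub hlen'
    rw [← hrest] at hgen
    simpa using h.add_mem_gen hJP hgen (subset_gen haJ) (by simpa using hΔ)

lemma add_mem_gen_of_mem_pos0 (h : GradedRootSystem Δ d Pos) (hJ : IsUpperIdeal Δ d Pos 1 J)
    {t δ : E} (ht : t ∈ gen Δ J) (hδ : δ ∈ pos0 d Pos) (htδ : t + δ ∈ Δ) :
    t + δ ∈ gen Δ J := by
  obtain ⟨L, hL, hLJ, rfl⟩ := exists_list_of_mem_gen ht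
  exact h.list_sum_add_mem_gen hJ hδ hL hLJ htδ

/-- The inductive step of `mem_gen_or_mem_gen_of_add_mem_idealPow`; `ih` is the induction
hypothesis for `t = (x - a) + y`. -/
lemma mem_gen_or_mem_gen_of_sub_mem (h : GradedRootSystem Δ d Pos)
    (hJ : IsUpperIdeal Δ d Pos 1 J) {x y a t : E} (hx : x ∈ Δ) (hy : y ∈ Δ) (hdx : 1 ≤ d x)
    (ha : a ∈ J) (ht : t ∈ gen Δ J) (hsum : x + y = a + t) (hxa : x - a ∈ Δ)
    (ih : 1 ≤ d (x - a) → x - a ∈ gen Δ J ∨ y ∈ gen Δ J) : x ∈ gen Δ J ∨ y ∈ gen Δ J := by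
  obtain ⟨haΔ, hda⟩ := hJ.1 ha
  have hdx' : d x = 1 + d (x - a) := by
    rw [← hda, ← h.grade_add a haΔ _ hxa (by simpa using hx), add_sub_cancel]
  rcases lt_or_eq_of_le (show 0 ≤ d (x - a) by omega) with hpos | hzero
  · refine (ih hpos).imp_left fun hxa' => ?_
    simpa using
      h.add_mem_gen (hJ.subset_pos h one_pos) hxa' (subset_gen ha) (by simpa using hx)
  by_cases hP : x - a ∈ Pos
  · have hxJ := hJ.add_mem_of_mem_pos0 h ha ⟨hP, hzero.symm⟩ (by rwa [add_sub_cancel])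
    rw [add_sub_cancel] at hxJ
    exact Or.inl (subset_gen hxJ)
  · have hneg : a - x ∈ pos0 d Pos := by
      rw [← neg_sub]
      refine ⟨not_not.mp (mt (h.pos_iff _ hxa).mpr hP), ?_⟩
      rw [h.grade_neg _ hxa, ← hzero, neg_zero]
    have hyt : y = t + (a - x) := by rw [add_sub_assoc', add_comm t, ← hsum, add_sub_cancel_left]
    exact Or.inr (hyt ▸ h.add_mem_gen_of_mem_pos0 hJ ht hneg (hyt ▸ hy))

lemma mem_gen_or_mem_gen_of_add_mem_idealPow (h : GradedRootSystem Δ d Pos)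
    (hJ : IsUpperIdeal Δ d Pos 1 J) {k : ℕ} {x y : E} (hs : x + y ∈ idealPow Δ J (k + 1))
    (hx : x ∈ Δ) (hy : y ∈ Δ) (hdx : 1 ≤ d x) (hdy : 1 ≤ d y) :
    x ∈ gen Δ J ∨ y ∈ gen Δ J := by
  induction k generalizing x y with
  | zero =>
    have hd := (hJ.1 hs).2
    rw [h.grade_add x hx y hy (hJ.1 hs).1] at hd
    omega
  | succ k ih =>
    obtain ⟨hsΔ, a, ha, t, ht, hsum⟩ := hs
    have htJ : t ∈ gen Δ J := Set.mem_iUnion.mpr ⟨k, ht⟩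
    have haΔ := (hJ.1 ha).1
    have htΔ := (h.idealPow_subset_level_s5 (fun _ hb => hJ.1 hb) k ht).1
    by_cases hxa : x = a
    · exact Or.inl (hxa ▸ subset_gen ha)
    by_cases hya : y = a
    · exact Or.inr (hya ▸ subset_gen ha)
    rcases h.sub_mem_or_sub_mem_of_add_eq_add hx hy haΔ htΔ hsΔ hsum hxa hya with hxa' | hya'
    · have hrest : x - a + y = t := by rw [sub_add_eq_add_sub, hsum, add_sub_cancel_left]
      exact h.mem_gen_or_mem_gen_of_sub_mem hJ hx hy hdx ha htJ hsum hxa' fun hd =>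
        ih (hrest ▸ ht) hxa' hy hd hdy
    · have hrest : y - a + x = t := by
        rw [sub_add_eq_add_sub, add_comm y, hsum, add_sub_cancel_left]
      exact (h.mem_gen_or_mem_gen_of_sub_mem hJ hy hx hdy ha htJ (by rw [add_comm, hsum]) hya'
        fun hd => ih (hrest ▸ ht) hya' hx hd hdx).symm

lemma isClosedSubset_levelGE_diff_gen (h : GradedRootSystem Δ d Pos)
    (hJ : IsUpperIdeal Δ d Pos 1 J) : IsClosedSubset Δ (levelGE Δ d 1 \ gen Δ J) := by
  rintro x ⟨⟨hx, hdx⟩, hxJ⟩ y ⟨⟨hy, hdy⟩, hyJ⟩ hs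
  refine ⟨⟨hs, by rw [h.grade_add x hx y hy hs]; omega⟩, fun hsJ => ?_⟩
  obtain ⟨k, hk⟩ := Set.mem_iUnion.mp hsJ
  exact (h.mem_gen_or_mem_gen_of_add_mem_idealPow hJ hk hx hy hdx hdy).elim hxJ hyJ

lemma mem_pos0_or_mem_gen (h : GradedRootSystem Δ d Pos) {z : E} (hz : z ∈ Pos)
    (hzM : z ∉ levelGE Δ d 1 \ gen Δ J) : z ∈ pos0 d Pos ∨ z ∈ gen Δ J := by
  by_cases hzJ : z ∈ gen Δ J
  · exact Or.inr hzJ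
  · have hd : ¬ 1 ≤ d z := fun hd => hzM ⟨⟨h.pos_subset hz, hd⟩, hzJ⟩
    exact Or.inl ⟨hz, by linarith [h.grade_nonneg_of_mem_pos hz]⟩

lemma isClosedSubset_pos_diff_levelGE_diff_gen (h : GradedRootSystem Δ d Pos)
    (hJ : IsUpperIdeal Δ d Pos 1 J) :
    IsClosedSubset Δ (Pos \ (levelGE Δ d 1 \ gen Δ J)) := by
  rintro x ⟨hxP, hxM⟩ y ⟨hyP, hyM⟩ hs
  refine ⟨h.pos_add x hxP y hyP hs, ?_⟩
  rintro ⟨⟨-, hd⟩, hsJ⟩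
  apply hsJ
  rcases h.mem_pos0_or_mem_gen hxP hxM, h.mem_pos0_or_mem_gen hyP hyM with
    ⟨hx0 | hxJ, hy0 | hyJ⟩
  · rw [h.grade_add x (h.pos_subset hxP) y (h.pos_subset hyP) hs, hx0.2, hy0.2] at hd
    omega
  · rw [add_comm] at hs ⊢
    exact h.add_mem_gen_of_mem_pos0 hJ hyJ hx0 hs
  · exact h.add_mem_gen_of_mem_pos0 hJ hxJ hy0 hs
  · exact h.add_mem_gen (hJ.subset_pos h one_pos) hxJ hyJ hs

end GradedRootSystem

end

/-- If `I` is a lower ideal of `Δ(1)` and `Iᶜ = Δ(1) \\ I`, then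
`Δ(≥1) \\ ⟨Iᶜ⟩` is a bi-convex subset of `Δ⁺`. -/
theorem stmt5 (Δ : Set V) (d : V → ℤ) (Pos : Set V)
    (h : GradedRootSystem Δ d Pos) (I : Set V)
    (hI : IsLowerIdeal Δ d Pos 1 I) :
    IsBiConvex Δ Pos (levelGE Δ d 1 \ gen Δ (level Δ d 1 \ I)) :=
  ⟨h.isClosedSubset_levelGE_diff_gen hI.isUpperIdeal_diff,
    h.isClosedSubset_pos_diff_levelGE_diff_gen hI.isUpperIdeal_diff⟩
end

section
/- Let W be the Weyl group of Δ and W⁰ = {w ∈ W : w(α) ∈ Δ⁺ for all α ∈ Δ(0)⁺} the minimal-length coset representatives of W/W(0). If w ∈ W⁰, then N(w) ∩ Δ(1) is a lower ideal of the poset Δ(1), where N(w) = {γ ∈ Δ⁺ : −w(γ) ∈ Δ⁺}. -/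
open RealInnerProductSpace

variable {V : Type*} [NormedAddCommGroup V] [InnerProductSpace ℝ V] [FiniteDimensional ℝ V]

/-! If `γ ∈ N(w) ∩ Δ(1)` and `ν ≼ γ` with `ν ≠ γ`, write `γ - ν` as a sum of roots of `Δ(0)⁺`.
Since `⟪γ - ν, γ - ν⟫ > 0`, some summand `α` has `⟪γ, α⟫ > 0` or `⟪ν, α⟫ < 0`, so `γ - α` or
`ν + α` is again a root of level one, and the sum between the two ends loses the summand `α`.
Both steps preserve membership in `N(w)` because `w α ∈ Δ⁺` for `w ∈ W⁰`: a root that is a sum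
of two positive roots is positive, and `-w(γ - α) = -w γ + w α`, `-w ν = -w(ν + α) + w α`. -/

section

omit [FiniteDimensional ℝ V]

theorem sref_apply (α β : V) : sref α β = β - (2 * ⟪β, α⟫ / ⟪α, α⟫) • α := by
  change Submodule.reflection ((ℝ ∙ α)ᗮ) β = _
  rw [Submodule.reflection_orthogonal_apply, Submodule.reflection_singleton_apply,
    real_inner_self_eq_norm_sq, real_inner_comm]
  simp only [RCLike.ofReal_real_eq_id, id, two_smul]
  module

theorem mapsTo_of_mem_weyl {Δ : Set V} (hfin : Δ.Finite)
    (hrefl : ∀ α ∈ Δ, ∀ β ∈ Δ, β - (2 * ⟪β, α⟫ / ⟪α, α⟫) • α ∈ Δ)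
    {w : V ≃ₗ[ℝ] V} (hw : w ∈ weyl Δ) : Set.MapsTo w Δ Δ := by
  induction hw using Subgroup.closure_induction with
  | mem _ hg =>
    obtain ⟨α, hα, rfl⟩ := hg
    intro β hβ
    rw [sref_apply]
    exact hrefl α hα β hβ
  | one => exact Set.mapsTo_id Δ
  | mul _ _ _ _ hu hv => exact hu.comp hv
  | inv u _ hu =>
    have hbij := (hfin.injOn_iff_bijOn_of_mapsTo hu).mp u.injective.injOn
    intro γ hγ
    obtain ⟨x, hx, rfl⟩ := hbij.surjOn hγ
    simpa using hx

theorem exists_mem_inner_pos_of_sum_eq {x : V} (hx : x ≠ 0) {l : List V} (hsum : l.sum = x) :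
    ∃ a ∈ l, 0 < ⟪x, a⟫ := by
  refine List.exists_lt_of_sum_lt (fun _ => 0) (⟪x, ·⟫) ?_
  have hinner : ⟪x, l.sum⟫ = (l.map (⟪x, ·⟫)).sum := map_list_sum (innerₛₗ ℝ x) l
  rw [← hinner, hsum]
  simpa using real_inner_self_pos.mpr hx

variable {Δ : Set V} {d : V → ℤ} {Pos : Set V}

theorem GradedRootSystem.sub_mem_of_inner_pos_s6 (h : GradedRootSystem Δ d Pos) {α β : V}
    (hα : α ∈ Δ) (hβ : β ∈ Δ) (hip : 0 < ⟪β, α⟫) (hne : β ≠ α) : β - α ∈ Δ := by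
  have hα0 : 0 < ‖α‖ := norm_pos_iff.mpr (h.nonzero α hα)
  have hβ0 : 0 < ‖β‖ := norm_pos_iff.mpr (h.nonzero β hβ)
  have hcs : ⟪β, α⟫ < ‖β‖ * ‖α‖ := by
    refine inner_lt_norm_mul_iff_real.mpr fun hpar => hne ?_
    have hβα : β = (‖β‖ / ‖α‖) • α := by
      rw [div_eq_inv_mul, mul_smul, ← hpar, smul_smul, inv_mul_cancel₀ hα0.ne', one_smul]
    rcases h.reduced α hα _ (hβα ▸ hβ) with hc | hc
    · rw [hβα, hc, one_smul]
    · linarith [div_pos hβ0 hα0]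
  obtain ⟨n, hn⟩ := h.crystallographic α hα β hβ
  obtain ⟨m, hm⟩ := h.crystallographic β hβ α hα
  rw [real_inner_self_eq_norm_sq] at hn hm
  rw [real_inner_comm] at hm
  have hn0 : 0 < n := by exact_mod_cast hn ▸ (by positivity : (0 : ℝ) < 2 * ⟪β, α⟫ / ‖α‖ ^ 2)
  have hm0 : 0 < m := by exact_mod_cast hm ▸ (by positivity : (0 : ℝ) < 2 * ⟪β, α⟫ / ‖β‖ ^ 2)
  have hnm : n * m < 4 := by
    have : (n * m : ℝ) < 4 := by
      rw [hn, hm, div_mul_div_comm, div_lt_iff₀ (by positivity)]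
      nlinarith
    exact_mod_cast this
  -- the Cartan integers are positive with product `< 4`, so one of them is `1`
  obtain rfl | rfl : n = 1 ∨ m = 1 := by
    by_contra! hne1
    nlinarith [lt_of_le_of_ne hn0 hne1.1.symm, lt_of_le_of_ne hm0 hne1.2.symm]
  · simpa [← hn] using h.reflect_mem α hα β hβ
  · have hrefl := h.reflect_mem β hβ α hα
    rw [real_inner_self_eq_norm_sq, real_inner_comm, ← hm] at hrefl
    simpa using h.neg_mem _ hrefl

theorem GradedRootSystem.add_mem_of_inner_neg_s6 (h : GradedRootSystem Δ d Pos) {α β : V}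
    (hα : α ∈ Δ) (hβ : β ∈ Δ) (hip : ⟪β, α⟫ < 0) (hne : β ≠ -α) : β + α ∈ Δ := by
  have hsub := h.sub_mem_of_inner_pos_s6 hα (h.neg_mem β hβ) (by rw [inner_neg_left]; linarith)
    (fun h' => hne (neg_eq_iff_eq_neg.mp h'))
  simpa [add_comm] using h.neg_mem _ hsub

theorem GradedRootSystem.grade_sub (h : GradedRootSystem Δ d Pos) {γ α : V} (hγ : γ ∈ Δ)
    (hα : α ∈ Δ) (hγα : γ - α ∈ Δ) : d (γ - α) = d γ - d α := by
  have hadd := h.grade_add (γ - α) hγα α hα (by rwa [sub_add_cancel])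
  rw [sub_add_cancel] at hadd
  omega

theorem GradedRootSystem.neg_apply_sub_mem_pos (h : GradedRootSystem Δ d Pos)
    {w : V ≃ₗ[ℝ] V} (hw : Set.MapsTo w Δ Δ) {x α : V} (hx : -(w x) ∈ Pos) (hα : w α ∈ Pos)
    (hxα : x - α ∈ Δ) : -(w (x - α)) ∈ Pos := by
  have hmem : -(w (x - α)) ∈ Δ := by
    rw [← map_neg]
    exact hw (h.neg_mem _ hxα)
  rw [map_sub, neg_sub', sub_neg_eq_add] at hmem ⊢
  exact h.pos_add _ hx _ hα hmem

theorem GradedRootSystem.neg_apply_mem_pos_of_sub_eq_sum (h : GradedRootSystem Δ d Pos)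
    {w : V ≃ₗ[ℝ] V} (hw : w ∈ W0 Δ d Pos) {i : ℤ} (hi : i ≠ 0) {γ ν : V}
    (hγ : γ ∈ level Δ d i) (hγw : -(w γ) ∈ Pos) (hν : ν ∈ level Δ d i)
    (l : List V) (hl : ∀ a ∈ l, a ∈ pos0 d Pos) (hsum : γ - ν = l.sum) : -(w ν) ∈ Pos := by
  classical
  obtain rfl | hγν := eq_or_ne γ ν
  · exact hγw
  obtain ⟨α, hαl, hpos⟩ := exists_mem_inner_pos_of_sum_eq (sub_ne_zero.mpr hγν) hsum.symm
  obtain ⟨hαPos, hα0⟩ := hl α hαl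
  have hαΔ := h.pos_subset hαPos
  have hwα : w α ∈ Pos := hw.2 α (hl α hαl)
  have hmaps := mapsTo_of_mem_weyl h.finite h.reflect_mem hw.1
  have hl' : ∀ a ∈ l.erase α, a ∈ pos0 d Pos := fun a ha => hl a (List.mem_of_mem_erase ha)
  have hsum' : γ - ν = α + (l.erase α).sum := by
    rw [hsum, (List.perm_cons_erase hαl).sum_eq, List.sum_cons]
  rw [inner_sub_left] at hpos
  by_cases hγα : 0 < ⟪γ, α⟫
  · have hsubΔ := h.sub_mem_of_inner_pos_s6 hαΔ hγ.1 hγα (by rintro rfl; exact hi (hγ.2 ▸ hα0))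
    have hsub : γ - α ∈ level Δ d i :=
      ⟨hsubΔ, by rw [h.grade_sub hγ.1 hαΔ hsubΔ, hγ.2, hα0, sub_zero]⟩
    exact h.neg_apply_mem_pos_of_sub_eq_sum hw hi hsub
      (h.neg_apply_sub_mem_pos hmaps hγw hwα hsubΔ) hν (l.erase α) hl' (by rw [sub_right_comm, hsum', add_sub_cancel_left])
  · have haddΔ := h.add_mem_of_inner_neg_s6 hαΔ hν.1 (by linarith) (by
      rintro rfl
      exact hi (by rw [← hν.2, h.grade_neg α hαΔ, hα0, neg_zero]))
    have hadd : ν + α ∈ level Δ d i :=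
      ⟨haddΔ, by rw [h.grade_add ν hν.1 α hαΔ haddΔ, hν.2, hα0, add_zero]⟩
    have haddw := h.neg_apply_mem_pos_of_sub_eq_sum hw hi hγ hγw hadd (l.erase α) hl'
      (by rw [← sub_sub, hsum', add_sub_cancel_left])
    simpa using h.neg_apply_sub_mem_pos hmaps haddw hwα (by simpa using hν.1)
termination_by l.length
decreasing_by all_goals classical exact (List.length_erase_add_one hαl).symm ▸ Nat.lt_succ_self _

theorem GradedRootSystem.isLowerIdeal_invSet_inter_level (h : GradedRootSystem Δ d Pos)
    {w : V ≃ₗ[ℝ] V} (hw : w ∈ W0 Δ d Pos) {i : ℤ} (hi : 0 < i) :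
    IsLowerIdeal Δ d Pos i (invSet Pos w ∩ level Δ d i) := by
  refine ⟨Set.inter_subset_right, ?_⟩
  rintro γ ⟨⟨-, hγw⟩, hγ⟩ ν hν hνγ
  obtain ⟨l, hl, hsum⟩ := AddSubmonoid.exists_list_of_mem_closure hνγ
  have hνw := h.neg_apply_mem_pos_of_sub_eq_sum hw hi.ne' hγ hγw hν l
    (fun a ha => (hl a ha).1) hsum.symm
  exact ⟨⟨h.compatible ν hν.1 (hν.2 ▸ hi), hνw⟩, hν⟩

end

/-- If `w ∈ W⁰`, then `N(w) ∩ Δ(1)` is a lower ideal of the poset `Δ(1)`. -/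
theorem stmt6 (Δ : Set V) (d : V → ℤ) (Pos : Set V)
    (h : GradedRootSystem Δ d Pos) (w : V ≃ₗ[ℝ] V) (hw : w ∈ W0 Δ d Pos) :
    IsLowerIdeal Δ d Pos 1 (invSet Pos w ∩ level Δ d 1) :=
  h.isLowerIdeal_invSet_inter_level hw one_pos
end
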